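/- In the Frohman–Gelca algebra A_t (t nonzero, not a root of unity), the coset of e_{(0,0)} in A_t/C(A_t) is not in the span of the cosets of e_{(2,0)}, e_{(0,1)}, e_{(1,0)}, e_{(1,1)}; moreover, the cosets of e_{(0,0)}, e_{(2,0)}, e_{(0,1)}, e_{(1,0)}, e_{(1,1)} form a basis of A_t/C(A_t). -/

import Mathlib

noncomputable section

def negRel : Setoid (ℤ × ℤ) where
  r v w := v = w ∨ v = -w
  iseqv := by
    refine ⟨fun v => Or.inl rfl, ?_, ?_⟩
    · rintro v w (rfl | rfl) <;> simp
    · rintro u v w (rfl | rfl) (h | h) <;> simp_all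

/-- The index set `ℤ² / ±1`. -/
abbrev Q2 := Quotient negRel

/-- The underlying vector space of the Frohman–Gelca algebra: the free `ℂ`-module on `ℤ²/±1`. -/
abbrev FG := Q2 →₀ ℂ

/-- The basis vector `e_{(p,q)}`. -/
def e (v : ℤ × ℤ) : FG := Finsupp.single (Quotient.mk negRel v) 1

lemma e_neg (v : ℤ × ℤ) : e (-v) = e v := by
  unfold e
  congr 1
  exact Quotient.sound (Or.inr rfl)

/-- The determinant `p s - q r`. -/
def det (v w : ℤ × ℤ) : ℤ := v.1 * w.2 - v.2 * w.1

/-- Product-to-sum formula on representatives. -/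
def mulB (t : ℂ) (v w : ℤ × ℤ) : FG :=
  t ^ (det v w) • e (v + w) + t ^ (-(det v w)) • e (v - w)

lemma mulB_negL (t : ℂ) (v w : ℤ × ℤ) : mulB t (-v) w = mulB t v w := by
  unfold mulB
  have hd : det (-v) w = -(det v w) := by simp [det]; ring
  rw [hd, neg_neg, show -v + w = -(v - w) by abel, show -v - w = -(v + w) by abel,
    e_neg, e_neg, add_comm]

lemma mulB_negR (t : ℂ) (v w : ℤ × ℤ) : mulB t v (-w) = mulB t v w := by
  unfold mulB
  have hd : det v (-w) = -(det v w) := by simp [det]; ring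
  rw [hd, neg_neg, show v + -w = v - w by abel, show v - -w = v + w by abel, add_comm]

/-- Product-to-sum formula on the quotient `ℤ²/±1`. -/
def qmulB (t : ℂ) : Q2 → Q2 → FG :=
  Quotient.lift₂ (mulB t) (by
    rintro a b a' b' (rfl | rfl) (rfl | rfl)
    · rfl
    · rw [mulB_negR]
    · rw [mulB_negL]
    · rw [mulB_negL, mulB_negR])

/-- Multiplication in the Frohman–Gelca algebra, extended bilinearly. -/
def fgMul (t : ℂ) (a b : FG) : FG :=
  a.sum fun x c => b.sum fun y d => (c * d) • qmulB t x y

/-- The span of commutators `C(A_t)`. -/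
def commSpan (t : ℂ) : Submodule ℂ FG :=
  Submodule.span ℂ {x | ∃ a b : FG, x = fgMul t a b - fgMul t b a}



/-!
The linear map `classSum`, which adds up the coefficients of an element of `A_t` over each of the
five classes (the zero vector, or a nonzero vector with given parities), vanishes on commutators: with
`d = det v w` one has `[e_v, e_w] = (t^d - t^{-d}) (e_{v+w} - e_{v-w})`, and for `d ≠ 0` the
vectors `v ± w` are nonzero and congruent mod 2. Conversely, as `t^d ≠ t^{-d}` for `d ≠ 0`, the
same identity gives `e_x ≡ e_y` modulo commutators whenever `x ≡ y mod 2` and `det x y ≠ 0`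
(write `x = v + w`, `y = v - w`); collinear pairs are joined through a transverse third vector.
So the classes of the five representatives span `A_t / C(A_t)`, and `classSum` sends them to the
standard basis of `ℂ⁵`.
-/

lemma zpow_ne_one_of_pow_ne_one {M : Type*} [DivisionMonoid M] {t : M}
    (hroot : ∀ n : ℕ, 0 < n → t ^ n ≠ 1) {n : ℤ} (hn : n ≠ 0) : t ^ n ≠ 1 := by
  rcases n with k | k
  · rw [Int.ofNat_eq_natCast, zpow_natCast]
    exact hroot k (Nat.pos_of_ne_zero fun hk => hn (by rw [hk]; rfl))
  · rw [zpow_negSucc, Ne, inv_eq_one]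
    exact hroot (k + 1) k.succ_pos

lemma zpow_sub_zpow_neg_ne_zero {K : Type*} [Field K] {t : K} (ht : t ≠ 0)
    (hroot : ∀ n : ℕ, 0 < n → t ^ n ≠ 1) {n : ℤ} (hn : n ≠ 0) : t ^ n - t ^ (-n) ≠ 0 := by
  intro h
  apply zpow_ne_one_of_pow_ne_one hroot (mul_ne_zero two_ne_zero hn)
  calc t ^ (2 * n) = t ^ n * t ^ n := by rw [two_mul, zpow_add₀ ht]
    _ = t ^ n * t ^ (-n) := by rw [sub_eq_zero.mp h]
    _ = 1 := by rw [← zpow_add₀ ht, add_neg_cancel, zpow_zero]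

lemma det_swap (v w : ℤ × ℤ) : det w v = -det v w := by
  simp only [det]; ring

lemma det_self (v : ℤ × ℤ) : det v v = 0 := by
  simp only [det]; ring

lemma det_neg_right (v w : ℤ × ℤ) : det v (-w) = -det v w := by
  simp only [det, Prod.fst_neg, Prod.snd_neg]; ring

lemma det_add_sub (v w : ℤ × ℤ) : det (v + w) (v - w) = -2 * det v w := by
  simp only [det, Prod.fst_add, Prod.snd_add, Prod.fst_sub, Prod.snd_sub]; ring

lemma det_eq_zero_trans {x y z : ℤ × ℤ} (hy : y ≠ 0) (hxy : det x y = 0) (hyz : det y z = 0) :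
    det x z = 0 := by
  simp only [det] at *
  have hy' : y.1 ≠ 0 ∨ y.2 ≠ 0 := by
    contrapose! hy
    exact Prod.ext hy.1 hy.2
  rcases hy' with h | h
  · exact (mul_eq_zero.mp (by linear_combination x.1 * hyz + z.1 * hxy)).resolve_left h
  · exact (mul_eq_zero.mp (by linear_combination x.2 * hyz + z.2 * hxy)).resolve_left h

lemma exists_add_eq_and_sub_eq {x y : ℤ × ℤ} (h1 : x.1 % 2 = y.1 % 2) (h2 : x.2 % 2 = y.2 % 2) :
    ∃ v w : ℤ × ℤ, v + w = x ∧ v - w = y :=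
  ⟨((x.1 + y.1) / 2, (x.2 + y.2) / 2), ((x.1 - y.1) / 2, (x.2 - y.2) / 2),
    Prod.ext (by simp only [Prod.fst_add]; omega) (by simp only [Prod.snd_add]; omega),
    Prod.ext (by simp only [Prod.fst_sub]; omega) (by simp only [Prod.snd_sub]; omega)⟩

lemma fgMul_e_e (t : ℂ) (v w : ℤ × ℤ) : fgMul t (e v) (e w) = mulB t v w := by
  simp only [fgMul, e, Finsupp.sum_single_index, zero_mul, zero_smul, one_mul, one_smul]
  rfl

lemma mulB_sub_mulB_swap (t : ℂ) (v w : ℤ × ℤ) :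
    mulB t v w - mulB t w v = (t ^ det v w - t ^ (-det v w)) • (e (v + w) - e (v - w)) := by
  rw [mulB, mulB, det_swap, neg_neg, add_comm w v, ← neg_sub v w, e_neg]
  module

/-- The zero vector, then the parity classes ee, eo, oe, oo of nonzero vectors. -/
def cls (v : ℤ × ℤ) : Fin 5 :=
  if v = 0 then 0
  else if v.1 % 2 = 0 then (if v.2 % 2 = 0 then 1 else 2)
  else (if v.2 % 2 = 0 then 3 else 4)

lemma cls_neg (v : ℤ × ℤ) : cls (-v) = cls v := by
  have h : ∀ a : ℤ, -a % 2 = a % 2 := by omega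
  simp only [cls, neg_eq_zero, Prod.fst_neg, Prod.snd_neg, h]

lemma cls_eq_zero_iff {v : ℤ × ℤ} : cls v = 0 ↔ v = 0 := by
  unfold cls
  split_ifs <;> simp_all

lemma cls_eq_cls_iff {x y : ℤ × ℤ} (hx : x ≠ 0) (hy : y ≠ 0) :
    cls x = cls y ↔ x.1 % 2 = y.1 % 2 ∧ x.2 % 2 = y.2 % 2 := by
  unfold cls
  rw [if_neg hx, if_neg hy]
  split_ifs <;>
    first | exact iff_of_true rfl (by omega) | exact iff_of_false (by decide) (by omega)

lemma cls_add_eq_cls_sub {v w : ℤ × ℤ} (hd : det v w ≠ 0) : cls (v + w) = cls (v - w) := by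
  have h1 : v + w ≠ 0 := fun h => hd (by
    rw [eq_neg_of_add_eq_zero_right h, det_neg_right, det_self, neg_zero])
  have h2 : v - w ≠ 0 := fun h => hd (by rw [← sub_eq_zero.mp h, det_self])
  rw [cls_eq_cls_iff h1 h2]
  simp only [Prod.fst_add, Prod.snd_add, Prod.fst_sub, Prod.snd_sub]
  omega

def qcls : Q2 → Fin 5 :=
  Quotient.lift cls (by
    rintro a b (rfl | rfl)
    · rfl
    · exact cls_neg b)

def classSum : FG →ₗ[ℂ] (Fin 5 → ℂ) :=
  Finsupp.linearCombination ℂ fun q => Pi.single (qcls q) 1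

lemma classSum_e (v : ℤ × ℤ) : classSum (e v) = Pi.single (cls v) 1 := by
  rw [classSum, e, Finsupp.linearCombination_single, one_smul]
  rfl

lemma classSum_mulB_swap (t : ℂ) (v w : ℤ × ℤ) :
    classSum (mulB t v w) = classSum (mulB t w v) := by
  rw [← sub_eq_zero, ← map_sub, mulB_sub_mulB_swap, map_smul, map_sub, classSum_e, classSum_e]
  by_cases hd : det v w = 0
  · simp [hd]
  · rw [cls_add_eq_cls_sub hd, sub_self, smul_zero]

lemma classSum_qmulB_swap (t : ℂ) (x y : Q2) :
    classSum (qmulB t x y) = classSum (qmulB t y x) :=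
  Quotient.inductionOn₂ x y (classSum_mulB_swap t)

lemma classSum_fgMul_swap (t : ℂ) (a b : FG) :
    classSum (fgMul t a b) = classSum (fgMul t b a) := by
  simp only [fgMul, map_finsuppSum, map_smul]
  rw [Finsupp.sum_comm]
  refine Finsupp.sum_congr fun x _ => Finsupp.sum_congr fun y _ => ?_
  rw [mul_comm, classSum_qmulB_swap]

lemma commSpan_le_ker_classSum (t : ℂ) : commSpan t ≤ LinearMap.ker classSum := by
  rw [commSpan, Submodule.span_le]
  rintro _ ⟨a, b, rfl⟩
  rw [SetLike.mem_coe, LinearMap.mem_ker, map_sub, classSum_fgMul_swap, sub_self]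

lemma e_add_sub_e_sub_mem_commSpan {t : ℂ} (ht : t ≠ 0)
    (hroot : ∀ n : ℕ, 0 < n → t ^ n ≠ 1) {v w : ℤ × ℤ} (hd : det v w ≠ 0) :
    e (v + w) - e (v - w) ∈ commSpan t := by
  have hmem : fgMul t (e v) (e w) - fgMul t (e w) (e v) ∈ commSpan t :=
    Submodule.subset_span ⟨e v, e w, rfl⟩
  rw [fgMul_e_e, fgMul_e_e, mulB_sub_mulB_swap] at hmem
  exact (Submodule.smul_mem_iff _ (zpow_sub_zpow_neg_ne_zero ht hroot hd)).mp hmem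

lemma e_sub_e_mem_commSpan_of_det_ne_zero {t : ℂ} (ht : t ≠ 0)
    (hroot : ∀ n : ℕ, 0 < n → t ^ n ≠ 1) {x y : ℤ × ℤ} (h1 : x.1 % 2 = y.1 % 2)
    (h2 : x.2 % 2 = y.2 % 2) (hd : det x y ≠ 0) : e x - e y ∈ commSpan t := by
  obtain ⟨v, w, rfl, rfl⟩ := exists_add_eq_and_sub_eq h1 h2
  exact e_add_sub_e_sub_mem_commSpan ht hroot fun h => hd (by rw [det_add_sub, h, mul_zero])

lemma e_sub_e_mem_commSpan_of_parity {t : ℂ} (ht : t ≠ 0)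
    (hroot : ∀ n : ℕ, 0 < n → t ^ n ≠ 1) {x y : ℤ × ℤ} (hx : x ≠ 0) (hy : y ≠ 0)
    (h1 : x.1 % 2 = y.1 % 2) (h2 : x.2 % 2 = y.2 % 2) : e x - e y ∈ commSpan t := by
  obtain hd | hd := ne_or_eq (det x y) 0
  · exact e_sub_e_mem_commSpan_of_det_ne_zero ht hroot h1 h2 hd
  -- `x` and `y` are collinear: pass through `z = x + 2 x⊥`, which is transverse to both.
  set z : ℤ × ℤ := (x.1 - 2 * x.2, x.2 + 2 * x.1)
  have hz1 : z.1 % 2 = x.1 % 2 := by simp only [z]; omega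
  have hz2 : z.2 % 2 = x.2 % 2 := by simp only [z]; omega
  have hxz : det x z ≠ 0 := by
    have hx' : x.1 ≠ 0 ∨ x.2 ≠ 0 := by
      contrapose! hx
      exact Prod.ext hx.1 hx.2
    have : det x z = 2 * x.1 ^ 2 + 2 * x.2 ^ 2 := by simp only [det, z]; ring
    rw [this]
    rcases hx' with h | h <;> positivity
  have hzy : det z y ≠ 0 := by
    rw [det_swap, neg_ne_zero]
    exact fun h => hxz (det_eq_zero_trans hy hd h)
  rw [← sub_add_sub_cancel (e x) (e z) (e y)]
  exact add_mem (e_sub_e_mem_commSpan_of_det_ne_zero ht hroot hz1.symm hz2.symm hxz)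
    (e_sub_e_mem_commSpan_of_det_ne_zero ht hroot (hz1.trans h1) (hz2.trans h2) hzy)

lemma e_sub_e_mem_commSpan_of_cls_eq {t : ℂ} (ht : t ≠ 0)
    (hroot : ∀ n : ℕ, 0 < n → t ^ n ≠ 1) {x y : ℤ × ℤ} (h : cls x = cls y) :
    e x - e y ∈ commSpan t := by
  by_cases hx : x = 0
  · obtain rfl : y = 0 := cls_eq_zero_iff.mp (h ▸ cls_eq_zero_iff.mpr hx)
    rw [hx, sub_self]
    exact zero_mem _
  have hy : y ≠ 0 := fun hy => hx (cls_eq_zero_iff.mp (h.trans (cls_eq_zero_iff.mpr hy)))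
  obtain ⟨h1, h2⟩ := (cls_eq_cls_iff hx hy).mp h
  exact e_sub_e_mem_commSpan_of_parity ht hroot hx hy h1 h2

def classRep : Fin 5 → ℤ × ℤ := ![(0, 0), (2, 0), (0, 1), (1, 0), (1, 1)]

lemma cls_classRep (i : Fin 5) : cls (classRep i) = i := by
  revert i; decide

lemma span_range_e : Submodule.span ℂ (Set.range e) = ⊤ := by
  have : Set.range e = Set.range (Finsupp.basisSingleOne : Module.Basis Q2 ℂ FG) := by
    rw [Finsupp.coe_basisSingleOne]
    exact Quotient.mk_surjective.range_comp (fun q : Q2 => Finsupp.single q (1 : ℂ))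
  rw [this, Module.Basis.span_eq]

lemma span_range_mk_e (t : ℂ) :
    Submodule.span ℂ (Set.range fun v => (Submodule.Quotient.mk (e v) : FG ⧸ commSpan t)) =
      ⊤ := by
  rw [← (commSpan t).range_mkQ, ← Submodule.map_top, ← span_range_e, ← Submodule.span_image,
    ← Set.range_comp]
  rfl

lemma span_range_mk_e_classRep {t : ℂ} (ht : t ≠ 0)
    (hroot : ∀ n : ℕ, 0 < n → t ^ n ≠ 1) :
    Submodule.span ℂ
      (Set.range fun i => (Submodule.Quotient.mk (e (classRep i)) : FG ⧸ commSpan t)) = ⊤ := by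
  rw [eq_top_iff, ← span_range_mk_e, Submodule.span_le]
  rintro _ ⟨v, rfl⟩
  refine Submodule.subset_span ⟨cls v, (Submodule.Quotient.eq _).mpr ?_⟩
  exact e_sub_e_mem_commSpan_of_cls_eq ht hroot (cls_classRep _)

lemma linearIndependent_mk_e_classRep (t : ℂ) :
    LinearIndependent ℂ
      fun i => (Submodule.Quotient.mk (e (classRep i)) : FG ⧸ commSpan t) := by
  apply LinearIndependent.of_comp ((commSpan t).liftQ classSum (commSpan_le_ker_classSum t))
  have : (commSpan t).liftQ classSum (commSpan_le_ker_classSum t) ∘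
      (fun i => Submodule.Quotient.mk (e (classRep i))) = fun i => Pi.single i 1 := by
    funext i
    rw [Function.comp_apply, Submodule.liftQ_apply, classSum_e, cls_classRep]
  rw [this]
  exact Pi.linearIndependent_single_one (Fin 5) ℂ

theorem stmt15 (t : ℂ) (ht : t ≠ 0) (hroot : ∀ n : ℕ, 0 < n → t ^ n ≠ 1) :
    ((Submodule.Quotient.mk (e (0, 0)) : FG ⧸ commSpan t) ∉
      Submodule.span ℂ {(Submodule.Quotient.mk (e (2, 0)) : FG ⧸ commSpan t),
        Submodule.Quotient.mk (e (0, 1)),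
        Submodule.Quotient.mk (e (1, 0)),
        Submodule.Quotient.mk (e (1, 1))}) ∧
    ∃ b : Module.Basis (Fin 5) ℂ (FG ⧸ commSpan t), ∀ i : Fin 5,
      b i = ![(Submodule.Quotient.mk (e (0, 0)) : FG ⧸ commSpan t),
        Submodule.Quotient.mk (e (2, 0)),
        Submodule.Quotient.mk (e (0, 1)),
        Submodule.Quotient.mk (e (1, 0)),
        Submodule.Quotient.mk (e (1, 1))] i := by
  have hli := linearIndependent_mk_e_classRep t
  refine ⟨?_, Module.Basis.mk hli (span_range_mk_e_classRep ht hroot).ge, fun i => ?_⟩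
  · have := hli.notMem_span_image (s := {1, 2, 3, 4}) (x := 0) (by decide)
    simpa [Set.image_insert_eq, classRep] using this
  · rw [Module.Basis.mk_apply]
    fin_cases i <;> rfl

end
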